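/- arXiv:2402.10343 — 8 statements merged into one kernel-verified Lean document; each statement's English description precedes it below -/
import Mathlib

section
/- Let e₁ = (x₁,y₁), …, e_k = (x_k,y_k) be directed edges of the complete directed graph G on n vertices such that the 2k endpoints x₁, y₁, …, x_k, y_k are pairwise distinct and all different from the source s. If S is a valid relaxation sequence for G, then for every permutation σ of {1, …, k}, the sequence (e_{σ(1)}, …, e_{σ(k)}) is a subsequence of S. -/
/-!
The endpoints `x_{σ 1}, y_{σ 1}, x_{σ 2}, y_{σ 2}, …` are pairwise distinct and different from
`s`, so `s` followed by them is a simple path from `s`. Its edge sequence contains the edges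
`(x_{σ i}, y_{σ i})` in this order (interleaved with the connecting edges `(y_{σ i}, x_{σ (i+1)})`),
and a valid relaxation sequence contains that edge sequence.
-/

/-- `S` is a valid relaxation sequence for the complete directed graph on vertex
type `α` with source `s`: `S` contains (as a subsequence, in order but not
necessarily contiguously) the edge sequence of every simple path starting at `s`. -/
def IsValidRelaxSeq {α : Type*} (s : α) (S : List (α × α)) : Prop :=
  ∀ p : List α, p ≠ [] → p.head? = some s → p.Nodup → (p.zip p.tail).Sublist S

def endpoints {α : Type*} (L : List (α × α)) : List α :=
  L.flatMap fun e => [e.1, e.2]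

lemma endpoints_perm {α : Type*} (L : List (α × α)) :
    (endpoints L).Perm (L.map Prod.fst ++ L.map Prod.snd) := by
  induction L with
  | nil => rfl
  | cons e L ih => simpa [endpoints] using ((ih.cons e.2).trans List.perm_middle.symm).cons e.1

lemma sublist_zip_cons_endpoints {α : Type*} (L : List (α × α)) (a : α) :
    L.Sublist ((a :: endpoints L).zip (endpoints L)) := by
  induction L generalizing a with
  | nil => simp
  | cons e L ih => simpa [endpoints] using ((ih e.2).cons_cons e).cons (a, e.1)

theorem IsValidRelaxSeq.sublist_of_nodup {α : Type*} {s : α} {S : List (α × α)}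
    (hS : IsValidRelaxSeq s S) {L : List (α × α)}
    (hnd : (L.map Prod.fst ++ L.map Prod.snd).Nodup) (hs : s ∉ L.map Prod.fst ++ L.map Prod.snd) :
    L.Sublist S := by
  have hperm := endpoints_perm L
  have hpath : (s :: endpoints L).Nodup :=
    List.nodup_cons.2 ⟨fun h => hs (hperm.mem_iff.1 h), hperm.nodup_iff.2 hnd⟩
  exact (sublist_zip_cons_endpoints L s).trans (hS _ (List.cons_ne_nil _ _) rfl hpath)

theorem stmt_2_general {n : ℕ} (s : Fin n) (k : ℕ) (x y : Fin k → Fin n)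
    (hinj : Function.Injective (Sum.elim x y : Fin k ⊕ Fin k → Fin n))
    (hxs : ∀ i, x i ≠ s) (hys : ∀ i, y i ≠ s)
    (S : List (Fin n × Fin n)) (hS : IsValidRelaxSeq s S)
    (σ : Equiv.Perm (Fin k)) :
    (List.ofFn fun i => (x (σ i), y (σ i))).Sublist S := by
  refine hS.sublist_of_nodup ?_ ?_ <;> simp only [List.map_ofFn, Function.comp_def]
  · refine List.nodup_append.2 ⟨?_, ?_, ?_⟩
    · exact List.nodup_ofFn.2 ((hinj.comp Sum.inl_injective).comp σ.injective)
    · exact List.nodup_ofFn.2 ((hinj.comp Sum.inr_injective).comp σ.injective)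
    · simp only [List.mem_ofFn]
      rintro _ ⟨i, rfl⟩ _ ⟨j, rfl⟩
      exact hinj.ne Sum.inl_ne_inr
  · simp only [List.mem_append, List.mem_ofFn, not_or, not_exists]
    exact ⟨fun i => hxs (σ i), fun i => hys (σ i)⟩

/-- If the edges `eᵢ = (xᵢ, yᵢ)` have `2k` pairwise distinct endpoints, all distinct
from the source `s`, then any valid relaxation sequence `S` contains every
permutation of these edges as a subsequence. -/
theorem stmt_2 {n : ℕ} (hn : 2 ≤ n) (s : Fin n) (k : ℕ) (x y : Fin k → Fin n)
    (hinj : Function.Injective (Sum.elim x y : Fin k ⊕ Fin k → Fin n))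
    (hxs : ∀ i, x i ≠ s) (hys : ∀ i, y i ≠ s)
    (S : List (Fin n × Fin n)) (hS : IsValidRelaxSeq s S)
    (σ : Equiv.Perm (Fin k)) :
    (List.ofFn fun i => (x (σ i), y (σ i))).Sublist S :=
  stmt_2_general s k x y hinj hxs hys S hS σ
end

section
/- Let G be the complete directed graph on n ≥ 2 vertices with source s, let w assign a real weight to each edge, and let S be a finite sequence of edges of G. After processing S by relaxations, for every vertex v the tentative distance d(v) equals the minimum, over all walks from s to v whose edge sequence is a subsequence of S, of the total weight of the walk (and d(v) = +∞ if no such walk exists; the length-zero walk at s is a subsequence of every S). -/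
/-- Relaxing edge `e = (u, v)`: replace `d v` by `min (d v) (d u + w e)`. -/
noncomputable def relaxStep {α : Type*} [DecidableEq α] (w : α × α → ℝ) (d : α → EReal)
    (e : α × α) : α → EReal :=
  fun v => if v = e.2 then min (d v) (d e.1 + (w e : EReal)) else d v

/-- Processing a sequence of edges by relaxations, in order. -/
noncomputable def relaxList {α : Type*} [DecidableEq α] (w : α × α → ℝ) (d : α → EReal)
    (S : List (α × α)) : α → EReal :=
  S.foldl (relaxStep w) d

/-- Initial tentative distances: `d s = 0` and `d v = +∞` for `v ≠ s`. -/
noncomputable def initD {α : Type*} [DecidableEq α] (s : α) : α → EReal :=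
  fun v => if v = s then 0 else ⊤

lemma zipTail_concat {α : Type*} : ∀ (q : List α) (hq : q ≠ []) (x : α),
    (q ++ [x]).zip (q ++ [x]).tail = q.zip q.tail ++ [(q.getLast hq, x)]
  | [a], _, x => rfl
  | a :: b :: t, _, x => by
    have h := zipTail_concat (b :: t) (by simp) x
    simp only [List.cons_append, List.zip_cons_cons, List.tail_cons] at h ⊢
    rw [h]
    simp [List.getLast]

lemma sInf_image_add (A : Set EReal) (r : ℝ) :
    sInf ((fun c => c + (r : EReal)) '' A) = sInf A + r := by
  apply le_antisymm
  · have h : sInf ((fun c => c + (r : EReal)) '' A) - r ≤ sInf A := by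
      apply le_sInf
      intro a ha
      rw [EReal.sub_le_iff_le_add (Or.inl (EReal.coe_ne_bot r)) (Or.inl (EReal.coe_ne_top r))]
      exact sInf_le ⟨a, ha, rfl⟩
    calc sInf ((fun c => c + (r : EReal)) '' A)
        = sInf ((fun c => c + (r : EReal)) '' A) - r + r := EReal.sub_add_cancel.symm
      _ ≤ sInf A + r := add_le_add_left h _
  · apply le_sInf
    rintro _ ⟨a, ha, rfl⟩
    exact add_le_add_left (sInf_le ha) _

lemma walk_decomp {α : Type*} {p : List α} {s v : α} {l : List (α × α)} {f : α × α}
    (h1 : p.head? = some s) (h2 : p.getLast? = some v)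
    (h3 : p.zip p.tail = l ++ [f]) :
    ∃ q, p = q ++ [v] ∧ q ≠ [] ∧ q.head? = some s ∧ q.getLast? = some f.1 ∧ f.2 = v ∧
      q.zip q.tail = l := by
  rcases List.eq_nil_or_concat p with rfl | ⟨q, x, hp⟩
  · simp at h1
  rw [List.concat_eq_append] at hp
  subst hp
  have hx : x = v := by
    rw [List.getLast?_concat] at h2; exact (Option.some.inj h2)
  subst hx
  by_cases hq : q = []
  · subst hq; simp at h3
  have hz := zipTail_concat q hq x
  rw [h3] at hz
  obtain ⟨hE, hfg⟩ := List.append_inj' hz rfl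
  have hfg' : f = (q.getLast hq, x) := by simpa using hfg
  refine ⟨q, rfl, hq, ?_, ?_, ?_, hE.symm⟩
  · cases q with
    | nil => exact absurd rfl hq
    | cons a t => simpa using h1
  · simp [hfg', List.getLast?_eq_getLast hq]
  · rw [hfg']

/-- The set of total weights of admissible walks. -/
def walkSet {α : Type*} (w : α × α → ℝ) (s v : α) (S : List (α × α)) : Set EReal :=
  {c : EReal | ∃ p : List α,
    p.head? = some s ∧ p.getLast? = some v ∧ p.Chain' (· ≠ ·) ∧
    (p.zip p.tail).Sublist S ∧
    c = ((((p.zip p.tail).map w).sum : ℝ) : EReal)}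

lemma sublist_concat' {α : Type*} {l T : List α} {e : α} (h : l.Sublist (T ++ [e])) :
    l.Sublist T ∨ ∃ l', l = l' ++ [e] ∧ l'.Sublist T := by
  rcases List.sublist_append_iff.mp h with ⟨l1, l2, rfl, hl1, hl2⟩
  rcases List.sublist_singleton.mp hl2 with rfl | rfl
  · exact Or.inl (by simpa using hl1)
  · exact Or.inr ⟨l1, rfl, hl1⟩

lemma walkSet_concat_ne {α : Type*} (w : α × α → ℝ) {s v : α} {T : List (α × α)}
    {e : α × α} (hv : v ≠ e.2) : walkSet w s v (T ++ [e]) = walkSet w s v T := by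
  ext c; constructor
  · rintro ⟨p, h1, h2, h3, h4, rfl⟩
    rcases sublist_concat' h4 with h | ⟨l', hl, hl'⟩
    · exact ⟨p, h1, h2, h3, h, rfl⟩
    · obtain ⟨q, _, _, _, _, hfv, _⟩ := walk_decomp h1 h2 hl
      exact absurd hfv.symm hv
  · rintro ⟨p, h1, h2, h3, h4, rfl⟩
    exact ⟨p, h1, h2, h3, h4.trans (List.sublist_append_left T [e]), rfl⟩

lemma walkSet_concat_eq {α : Type*} (w : α × α → ℝ) {s : α} {T : List (α × α)}
    {e : α × α} (he : e.1 ≠ e.2) :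
    walkSet w s e.2 (T ++ [e]) =
      walkSet w s e.2 T ∪ (fun c => c + ((w e : ℝ) : EReal)) '' walkSet w s e.1 T := by
  ext c; constructor
  · rintro ⟨p, h1, h2, h3, h4, rfl⟩
    rcases sublist_concat' h4 with h | ⟨l', hl, hl'⟩
    · exact Or.inl ⟨p, h1, h2, h3, h, rfl⟩
    · obtain ⟨q, hpq, hq, hq1, hq2, hfv, hqz⟩ := walk_decomp h1 h2 hl
      refine Or.inr ⟨((((q.zip q.tail).map w).sum : ℝ) : EReal),
        ⟨q, hq1, hq2, ?_, hqz ▸ hl', rfl⟩, ?_⟩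
      · rw [hpq] at h3; exact (List.isChain_append.mp h3).1
      · simp only [hl, ← hqz, List.map_append, List.sum_append, List.map_cons,
          List.map_nil, List.sum_cons, List.sum_nil, add_zero, EReal.coe_add]
  · rintro (⟨p, h1, h2, h3, h4, rfl⟩ | ⟨c', ⟨p, h1, h2, h3, h4, rfl⟩, rfl⟩)
    · exact ⟨p, h1, h2, h3, h4.trans (List.sublist_append_left T [e]), rfl⟩
    · have hp : p ≠ [] := by rintro rfl; simp at h1
      have hlast : p.getLast hp = e.1 := by
        have h := List.getLast?_eq_getLast hp
        rw [h2] at h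
        exact (Option.some.inj h).symm
      refine ⟨p ++ [e.2], ?_, List.getLast?_concat, ?_, ?_, ?_⟩
      · cases p with
        | nil => exact absurd rfl hp
        | cons a t => simpa using h1
      · apply List.isChain_append.mpr
        refine ⟨h3, List.isChain_singleton _, ?_⟩
        intro x hx y hy
        rw [h2] at hx
        simp only [Option.mem_def, Option.some.injEq, List.head?_cons] at hx hy
        subst hx; subst hy
        exact he
      · rw [zipTail_concat p hp e.2, hlast]
        exact h4.append (List.Sublist.refl [e])
      · rw [zipTail_concat p hp e.2, hlast]
        simp [EReal.coe_add]

lemma relax_eq {α : Type*} [DecidableEq α] (w : α × α → ℝ) (s : α)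
    (S : List (α × α)) :
    (∀ e ∈ S, e.1 ≠ e.2) → ∀ v,
      relaxList w (initD s) S v = sInf (walkSet w s v S) := by
  induction S using List.reverseRecOn with
  | nil =>
    intro _ v
    show initD s v = _
    by_cases hv : v = s
    · subst hv
      have hset : walkSet w v v ([] : List (α × α)) = {0} := by
        ext c
        simp only [walkSet, Set.mem_setOf_eq, Set.mem_singleton_iff]
        constructor
        · rintro ⟨p, h1, h2, h3, h4, rfl⟩
          have hz : p.zip p.tail = [] := List.sublist_nil.mp h4
          cases p with
          | nil => simp at h1
          | cons a t =>
            cases t with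
            | nil => simp
            | cons b t' => simp at hz
        · rintro rfl
          exact ⟨[v], rfl, rfl, List.isChain_singleton _, by simp, by simp⟩
      rw [hset, sInf_singleton]
      simp [initD]
    · have hset : walkSet w s v ([] : List (α × α)) = ∅ := by
        ext c
        simp only [walkSet, Set.mem_setOf_eq, Set.mem_empty_iff_false, iff_false]
        rintro ⟨p, h1, h2, h3, h4, rfl⟩
        have hz : p.zip p.tail = [] := List.sublist_nil.mp h4
        cases p with
        | nil => simp at h1
        | cons a t =>
          cases t with
          | nil =>
            simp only [List.head?_cons, Option.some.injEq] at h1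
            simp only [List.getLast?_singleton, Option.some.injEq] at h2
            exact hv (h2 ▸ h1 ▸ rfl)
          | cons b t' => simp at hz
      rw [hset, sInf_empty]
      simp [initD, hv]
  | append_singleton T e IH =>
    intro hS v
    have hT : ∀ f ∈ T, f.1 ≠ f.2 := fun f hf => hS f (List.mem_append_left _ hf)
    have he : e.1 ≠ e.2 := hS e (by simp)
    have hfold : relaxList w (initD s) (T ++ [e]) v
        = relaxStep w (relaxList w (initD s) T) e v := by
      simp [relaxList, List.foldl_append]
    rw [hfold]
    unfold relaxStep
    by_cases hv : v = e.2
    · subst hv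
      simp only [if_pos rfl]
      rw [IH hT, IH hT, walkSet_concat_eq w he, sInf_union, ← sInf_image_add]
      rfl
    · simp only [if_neg hv]
      rw [IH hT v, walkSet_concat_ne w hv]

/-- After processing `S` by relaxations, the tentative distance of `v` equals the
minimum total weight over all walks from `s` to `v` whose edge sequence is a
subsequence of `S` (and `+∞ = sInf ∅` if no such walk exists). -/
theorem stmt_5 {n : ℕ} (hn : 2 ≤ n) (s : Fin n) (w : Fin n × Fin n → ℝ)
    (S : List (Fin n × Fin n)) (hS : ∀ e ∈ S, e.1 ≠ e.2) (v : Fin n) :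
    relaxList w (initD s) S v =
      sInf {c : EReal | ∃ p : List (Fin n),
        p.head? = some s ∧ p.getLast? = some v ∧ p.Chain' (· ≠ ·) ∧
        (p.zip p.tail).Sublist S ∧
        c = ((((p.zip p.tail).map w).sum : ℝ) : EReal)} := by
  exact relax_eq w s S hS v
end

section
/- Let G be the complete directed graph on n ≥ 2 vertices with source s, let w assign a real weight to each edge, and let S be a finite sequence of edges of G. After processing any prefix of S by relaxations, for every vertex v with tentative distance d(v) < +∞ there exists a walk from s to v whose edge sequence is a subsequence of that prefix and whose total weight equals d(v). -/
lemma zip_tail_concat {α : Type*} : ∀ (p : List α) (u v : α), p.getLast? = some u →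
    (p ++ [v]).zip ((p ++ [v]).tail) = p.zip p.tail ++ [(u, v)]
  | [], u, v, h => by simp at h
  | [a], u, v, h => by simp_all
  | a :: b :: t, u, v, h => by
      have ih := zip_tail_concat (b :: t) u v (by simpa using h)
      simpa using ih

lemma relax_aux {n : ℕ} (s : Fin n) (w : Fin n × Fin n → ℝ) :
    ∀ (P : List (Fin n × Fin n)), (∀ e ∈ P, e.1 ≠ e.2) → ∀ v : Fin n,
    relaxList w (initD s) P v ≠ ⊤ →
    ∃ p : List (Fin n),
      p.head? = some s ∧ p.getLast? = some v ∧ p.Chain' (· ≠ ·) ∧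
      (p.zip p.tail).Sublist P ∧
      relaxList w (initD s) P v = ((((p.zip p.tail).map w).sum : ℝ) : EReal) := by
  intro P
  induction P using List.reverseRecOn with
  | nil =>
    intro _ v hfin
    simp only [relaxList, List.foldl_nil, initD] at hfin ⊢
    by_cases hv : v = s
    · subst hv
      exact ⟨[v], rfl, rfl, List.isChain_singleton _, by simp, by simp⟩
    · simp [hv] at hfin
  | append_singleton Q e ih =>
    intro hne v hfin
    have hQne : ∀ e ∈ Q, e.1 ≠ e.2 := fun e he => hne e (List.mem_append_left _ he)
    have hfold : relaxList w (initD s) (Q ++ [e]) =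
        relaxStep w (relaxList w (initD s) Q) e := by
      simp [relaxList, List.foldl_append]
    rw [hfold] at hfin ⊢
    set dQ := relaxList w (initD s) Q with hdQ
    by_cases hv : v = e.2
    · subst hv
      simp only [relaxStep, if_pos rfl] at hfin ⊢
      rcases le_total (dQ e.2) (dQ e.1 + (w e : EReal)) with hle | hle
      · rw [min_eq_left hle] at hfin ⊢
        obtain ⟨p, h1, h2, h3, h4, h5⟩ := ih hQne e.2 hfin
        exact ⟨p, h1, h2, h3, h4.trans (List.sublist_append_left _ _), h5⟩
      · rw [min_eq_right hle] at hfin ⊢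
        have h1fin : dQ e.1 ≠ ⊤ := by
          intro h
          rw [h] at hfin
          exact hfin (EReal.top_add_of_ne_bot (by simp))
        obtain ⟨p, h1, h2, h3, h4, h5⟩ := ih hQne e.1 h1fin
        have hpne : p ≠ [] := by rintro rfl; simp at h1
        have hzip := zip_tail_concat p e.1 e.2 h2
        refine ⟨p ++ [e.2], ?_, ?_, ?_, ?_, ?_⟩
        · rwa [List.head?_append_of_ne_nil _ hpne]
        · simp
        · show List.IsChain _ (p ++ [e.2]); rw [List.isChain_append]
          refine ⟨h3, by simp, ?_⟩
          intro x hx y hy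
          rw [h2] at hx
          simp at hx hy
          subst hx; subst hy
          exact hne e (List.mem_append_right _ (by simp))
        · rw [hzip]
          have : [(e.1, e.2)] = [e] := by simp
          rw [this]
          exact h4.append (List.Sublist.refl _)
        · rw [hzip, h5]
          push_cast
          rw [← EReal.coe_add]
          simp
    · simp only [relaxStep, if_neg hv] at hfin ⊢
      obtain ⟨p, h1, h2, h3, h4, h5⟩ := ih hQne v hfin
      exact ⟨p, h1, h2, h3, h4.trans (List.sublist_append_left _ _), h5⟩

/-- After processing any prefix of `S` by relaxations, every vertex `v` with finite
tentative distance admits a walk from `s` to `v` whose edge sequence is a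
subsequence of that prefix and whose total weight equals the tentative distance. -/
theorem stmt_6 {n : ℕ} (hn : 2 ≤ n) (s : Fin n) (w : Fin n × Fin n → ℝ)
    (S : List (Fin n × Fin n)) (hS : ∀ e ∈ S, e.1 ≠ e.2)
    (P : List (Fin n × Fin n)) (hP : P <+: S) (v : Fin n)
    (hfin : relaxList w (initD s) P v ≠ ⊤) :
    ∃ p : List (Fin n),
      p.head? = some s ∧ p.getLast? = some v ∧ p.Chain' (· ≠ ·) ∧
      (p.zip p.tail).Sublist P ∧
      relaxList w (initD s) P v = ((((p.zip p.tail).map w).sum : ℝ) : EReal) := by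
  exact relax_aux s w P (fun e he => hS e (hP.sublist.subset he)) v hfin
end

section
/- Let G be the complete directed graph on n ≥ 2 vertices with source s, let S be a finite sequence of edges of G, and suppose some simple path P from s to a vertex v is not contained in S. Define edge weights by w(e) = 0 for edges e on P and w(e) = 1 for all other edges. Then after processing S by relaxations, the tentative distance d(v) is strictly greater than 0, while the minimum total weight of a simple path from s to v equals 0; hence S does not compute the correct distance to v for this weight function. -/
namespace List

variable {α : Type*}

theorem exists_eq_append_cons_cons_of_mem_zip_tail {l : List α} {a b : α}
    (h : (a, b) ∈ l.zip l.tail) : ∃ l₁ l₂, l = l₁ ++ a :: b :: l₂ := by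
  induction l with
  | nil => simp at h
  | cons x xs ih =>
    cases xs with
    | nil => simp at h
    | cons y ys =>
      rcases mem_cons.mp h with hxy | h
      · obtain ⟨rfl, rfl⟩ := Prod.mk.inj hxy
        exact ⟨[], ys, rfl⟩
      · obtain ⟨l₁, l₂, hl⟩ := ih h
        exact ⟨x :: l₁, l₂, by rw [hl, cons_append]⟩

theorem zip_tail_append_singleton {l : List α} {a b : α} (h : l.getLast? = some a) :
    (l ++ [b]).zip (l ++ [b]).tail = l.zip l.tail ++ [(a, b)] := by
  induction l with
  | nil => simp at h
  | cons x xs ih =>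
    cases xs with
    | nil =>
      obtain rfl : x = a := by simpa using h
      rfl
    | cons y ys =>
      rw [getLast?_cons_cons] at h
      simp only [cons_append, zip_cons_cons, tail_cons] at ih ⊢
      rw [ih h]

theorem Nodup.prefix_eq_of_getLast?_eq {l l₁ l₂ : List α} (hl : l.Nodup) (h₁ : l₁ <+: l)
    (h₂ : l₂ <+: l) (h : l₁.getLast? = l₂.getLast?) : l₁ = l₂ := by
  have key : ∀ {m₁ m₂ : List α}, m₁ <+: m₂ → m₂ <+: l → m₁.getLast? = m₂.getLast? → m₁ = m₂ := by
    rintro m₁ _ ⟨t, rfl⟩ hm h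
    rcases t.eq_nil_or_concat with rfl | ⟨t, b, rfl⟩
    · exact (append_nil m₁).symm
    · replace h : m₁.getLast? = some b := by simpa using h
      have hnd : (m₁ ++ t.concat b).Nodup := hm.sublist.nodup hl
      exact absurd rfl ((nodup_append.mp hnd).2.2 b (mem_of_getLast? h) b (by simp))
  rcases prefix_or_prefix_of_prefix h₁ h₂ with h' | h'
  · exact key h' h₂ h
  · exact (key h' h₁ h.symm).symm

end List

section Relaxation

variable {α : Type*} [DecidableEq α] {w : α × α → ℝ}

theorem relaxList_append (d : α → EReal) (S T : List (α × α)) :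
    relaxList w d (S ++ T) = relaxList w (relaxList w d S) T :=
  List.foldl_append

theorem relaxStep_nonneg (hw : ∀ e, 0 ≤ w e) {d : α → EReal} (hd : ∀ u, 0 ≤ d u) (e : α × α)
    (u : α) : 0 ≤ relaxStep w d e u := by
  unfold relaxStep
  split
  · exact le_min (hd u) (add_nonneg (hd e.1) (EReal.coe_nonneg.mpr (hw e)))
  · exact hd u

theorem relaxList_nonneg (hw : ∀ e, 0 ≤ w e) {d : α → EReal} (hd : ∀ u, 0 ≤ d u)
    (S : List (α × α)) (u : α) : 0 ≤ relaxList w d S u := by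
  induction S generalizing d with
  | nil => exact hd u
  | cons e S ih => exact ih (relaxStep_nonneg hw hd e)

theorem le_zero_of_relaxStep_le_zero (hw : ∀ e, 0 ≤ w e) {d : α → EReal} (hd : ∀ u, 0 ≤ d u)
    {e : α × α} {u : α} (h : relaxStep w d e u ≤ 0) :
    d u ≤ 0 ∨ (u = e.2 ∧ d e.1 ≤ 0 ∧ w e ≤ 0) := by
  unfold relaxStep at h
  split at h
  · rcases min_le_iff.mp h with h | h
    · exact Or.inl h
    · have hwe : (0 : EReal) ≤ w e := EReal.coe_nonneg.mpr (hw e)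
      refine Or.inr ⟨by assumption, ?_, ?_⟩
      · exact (le_add_of_nonneg_right hwe).trans h
      · exact EReal.coe_nonpos.mp ((le_add_of_nonneg_left (hd e.1)).trans h)
  · exact Or.inl h

theorem initD_nonneg (s u : α) : 0 ≤ initD s u := by
  unfold initD
  split
  · exact le_rfl
  · exact le_top

theorem eq_of_initD_le_zero {s u : α} (h : initD s u ≤ 0) : u = s := by
  by_contra hu
  simp [initD, hu] at h

end Relaxation

def ContainsPrefixEndingAt {α : Type*} (T : List (α × α)) (P : List α) (u : α) : Prop :=
  ∃ L, L <+: P ∧ L.getLast? = some u ∧ (L.zip L.tail).Sublist T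

namespace ContainsPrefixEndingAt

variable {α : Type*} {T T' : List (α × α)} {P : List α}

theorem of_head?_eq {u : α} (h : P.head? = some u) : ContainsPrefixEndingAt T P u := by
  obtain ⟨t, rfl⟩ : ∃ t, P = u :: t := List.head?_eq_some_iff.mp h
  exact ⟨[u], ⟨t, rfl⟩, rfl, List.nil_sublist T⟩

theorem mono {u : α} (h : ContainsPrefixEndingAt T P u) (hT : T.Sublist T') :
    ContainsPrefixEndingAt T' P u :=
  let ⟨L, hLP, hL, hLT⟩ := h
  ⟨L, hLP, hL, hLT.trans hT⟩

theorem append_edge {a b : α} (hP : P.Nodup) (h : ContainsPrefixEndingAt T P a)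
    (hab : (a, b) ∈ P.zip P.tail) : ContainsPrefixEndingAt (T ++ [(a, b)]) P b := by
  obtain ⟨L, hLP, hL, hLT⟩ := h
  obtain ⟨l₁, l₂, rfl⟩ := List.exists_eq_append_cons_cons_of_mem_zip_tail hab
  have hprefix : l₁ ++ [a] <+: l₁ ++ a :: b :: l₂ := ⟨b :: l₂, by simp⟩
  obtain rfl : L = l₁ ++ [a] := hP.prefix_eq_of_getLast?_eq hLP hprefix (by simp [hL])
  refine ⟨l₁ ++ [a] ++ [b], ⟨l₂, by simp⟩, by simp, ?_⟩
  rw [List.zip_tail_append_singleton hL]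
  exact hLT.append (List.Sublist.refl _)

theorem zip_tail_sublist {v : α} (hP : P.Nodup) (h : ContainsPrefixEndingAt T P v)
    (hv : P.getLast? = some v) : (P.zip P.tail).Sublist T := by
  obtain ⟨L, hLP, hL, hLT⟩ := h
  rwa [hP.prefix_eq_of_getLast?_eq hLP (List.prefix_refl P) (hL.trans hv.symm)] at hLT

end ContainsPrefixEndingAt

theorem containsPrefixEndingAt_of_relaxList_le_zero {α : Type*} [DecidableEq α]
    {w : α × α → ℝ} {P : List α} {d : α → EReal} (hP : P.Nodup) (hw : ∀ e, 0 ≤ w e)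
    (hwP : ∀ e, w e ≤ 0 → e ∈ P.zip P.tail) (hd : ∀ u, 0 ≤ d u)
    (hd₀ : ∀ u, d u ≤ 0 → P.head? = some u) (S : List (α × α)) {u : α}
    (h : relaxList w d S u ≤ 0) : ContainsPrefixEndingAt S P u := by
  induction S using List.reverseRecOn generalizing u with
  | nil => exact .of_head?_eq (hd₀ u h)
  | append_singleton S e ih =>
    rw [relaxList_append] at h
    rcases le_zero_of_relaxStep_le_zero hw (relaxList_nonneg hw hd S) h with h | ⟨rfl, h₁, hwe⟩
    · exact (ih h).mono (List.sublist_append_left S [e])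
    · exact (ih h₁).append_edge hP (hwP e hwe)

theorem stmt_8_general {n : ℕ} (s : Fin n)
    (S : List (Fin n × Fin n))
    (P : List (Fin n)) (v : Fin n)
    (hPne : P ≠ []) (hPhead : P.head? = some s) (hPlast : P.getLast? = some v)
    (hPnodup : P.Nodup)
    (hnc : ¬ (P.zip P.tail).Sublist S)
    (w : Fin n × Fin n → ℝ)
    (hw : ∀ e : Fin n × Fin n, w e = if e ∈ P.zip P.tail then 0 else 1) :
    0 < relaxList w (initD s) S v ∧
    sInf {c : EReal | ∃ p : List (Fin n),
        p ≠ [] ∧ p.head? = some s ∧ p.getLast? = some v ∧ p.Nodup ∧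
        c = ((((p.zip p.tail).map w).sum : ℝ) : EReal)} = 0 := by
  have hw₀ : ∀ e, 0 ≤ w e := fun e => by rw [hw]; split_ifs <;> norm_num
  have hwP : ∀ e, w e ≤ 0 → e ∈ P.zip P.tail := fun e he => by
    by_contra h
    rw [hw, if_neg h] at he
    norm_num at he
  refine ⟨?_, IsLeast.csInf_eq ⟨⟨P, hPne, hPhead, hPlast, hPnodup, ?_⟩, ?_⟩⟩
  · by_contra! hv
    refine hnc ((containsPrefixEndingAt_of_relaxList_le_zero hPnodup hw₀ hwP (initD_nonneg s)
      (fun u hu => ?_) S hv).zip_tail_sublist hPnodup hPlast)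
    rwa [eq_of_initD_le_zero hu]
  · rw [List.sum_eq_zero (by simp +contextual [hw])]
    rfl
  · rintro c ⟨p, -, -, -, -, rfl⟩
    refine EReal.coe_nonneg.mpr (List.sum_nonneg fun x hx => ?_)
    obtain ⟨e, -, rfl⟩ := List.mem_map.mp hx
    exact hw₀ e

/-- If the simple path `P` from `s` to `v` is not contained in `S`, then for the
weights assigning `0` to edges of `P` and `1` to all other edges, relaxation
processing of `S` leaves the tentative distance of `v` strictly positive, while
the minimum total weight of a simple path from `s` to `v` is `0`. -/
theorem stmt_8 {n : ℕ} (hn : 2 ≤ n) (s : Fin n)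
    (S : List (Fin n × Fin n)) (hSe : ∀ e ∈ S, e.1 ≠ e.2)
    (P : List (Fin n)) (v : Fin n)
    (hPne : P ≠ []) (hPhead : P.head? = some s) (hPlast : P.getLast? = some v)
    (hPnodup : P.Nodup)
    (hnc : ¬ (P.zip P.tail).Sublist S)
    (w : Fin n × Fin n → ℝ)
    (hw : ∀ e : Fin n × Fin n, w e = if e ∈ P.zip P.tail then 0 else 1) :
    0 < relaxList w (initD s) S v ∧
    sInf {c : EReal | ∃ p : List (Fin n),
        p ≠ [] ∧ p.head? = some s ∧ p.getLast? = some v ∧ p.Nodup ∧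
        c = ((((p.zip p.tail).map w).sum : ℝ) : EReal)} = 0 :=
  stmt_8_general s S P v hPne hPhead hPlast hPnodup hnc w hw
end

section
/- Let G be the complete directed graph on n ≥ 2 vertices with source s. If a sequence S of edges of G contains every simple path starting at s that visits all n vertices (every Hamiltonian path from s), then S contains every simple path starting at s; that is, S is a valid relaxation sequence. -/
private lemma zip_tail_append {α : Type*} :
    ∀ (p r : List α), (p.zip p.tail).Sublist ((p ++ r).zip (p ++ r).tail)
  | [], _ => by simp
  | [a], r => by simp
  | a :: b :: t, r => by
    have h := zip_tail_append (b :: t) r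
    simp only [List.cons_append, List.zip_cons_cons, List.tail_cons] at h ⊢
    exact h.cons₂ _

/-- If `S` contains every Hamiltonian path from `s` (simple path from `s` visiting
all `n` vertices), then `S` contains every simple path from `s`, i.e. `S` is a
valid relaxation sequence. -/
theorem stmt_10 {n : ℕ} (hn : 2 ≤ n) (s : Fin n) (S : List (Fin n × Fin n))
    (hham : ∀ p : List (Fin n), p.head? = some s → p.Nodup → p.length = n →
      (p.zip p.tail).Sublist S) :
    IsValidRelaxSeq s S := by
  intro p hne hhead hnd
  set r := (List.finRange n).filter (fun x => x ∉ p) with hr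
  set q := p ++ r with hq
  have hqnd : q.Nodup := by
    refine List.Nodup.append hnd ?_ ?_
    · exact (List.nodup_finRange n).filter _
    · intro x hxp hxr
      have := List.of_mem_filter hxr
      simp at this
      exact this hxp
  have hqall : ∀ x : Fin n, x ∈ q := by
    intro x
    by_cases hx : x ∈ p
    · exact List.mem_append.2 (Or.inl hx)
    · refine List.mem_append.2 (Or.inr ?_)
      refine List.mem_filter.2 ⟨List.mem_finRange x, ?_⟩
      simpa using hx
  have hqlen : q.length = n := by
    have h1 : q.toFinset = Finset.univ := by
      ext x; simp [hqall x]
    have h2 : q.toFinset.card = q.length := List.toFinset_card_of_nodup hqnd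
    rw [h1] at h2
    simpa using h2.symm
  have hqhead : q.head? = some s := by
    cases p with
    | nil => exact absurd rfl hne
    | cons a t =>
      simp only [List.head?_cons, Option.some.injEq] at hhead
      simp [hq, hhead]
  exact (zip_tail_append p r).trans (hham q hqhead hqnd hqlen)
end

section
/- For every ε > 0 there exists N such that for all n ≥ N, there exists a valid relaxation sequence for the complete directed graph on n vertices of length at most (1/2 + ε)·n³. -/
/-!
Order the vertices linearly. The forward sweep lists every ascending edge, sorted by
source; the backward sweep lists every descending edge, sorted by decreasing source. The edges
of an ascending walk have increasing sources, so they form a subsequence of the forward sweep;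
likewise for descending walks and the backward sweep. A simple path on `n` vertices has at most
`n - 1` edges, so it splits into at most `n - 1` maximal monotone runs of alternating direction,
and any `n` alternating sweeps contain it, whichever direction they start with. Taking
`⌈n / 2⌉` forward-backward rounds of `n (n - 1)` edges each gives length at most
`(n + 1) n (n - 1) / 2 ≤ n³ / 2`.
-/

open List

variable {α : Type*}

def IsWalk (E : List (α × α)) : Prop := E.IsChain fun e f => e.2 = f.1

theorem IsWalk.infix {E E' : List (α × α)} (hE : IsWalk E) (h : E' <:+: E) : IsWalk E' :=
  List.IsChain.infix hE h

theorem isWalk_zip_tail : ∀ p : List α, IsWalk (p.zip p.tail)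
  | [] | [_] => isChain_nil
  | [_, _] => isChain_singleton _
  | _ :: b :: c :: t => isChain_cons_cons.2 ⟨rfl, isWalk_zip_tail (b :: c :: t)⟩

theorem List.IsChain.rel_of_mem_zip_tail {R : α → α → Prop} :
    ∀ {p : List α}, p.IsChain R → ∀ e ∈ p.zip p.tail, R e.1 e.2
  | [], _ | [_], _ => by simp
  | a :: b :: t, h => by
    rw [isChain_cons_cons] at h
    simpa [h.1] using h.2.rel_of_mem_zip_tail

theorem IsWalk.pairwise_fst {r : α → α → Prop} [IsTrans α r] {E : List (α × α)}
    (hE : IsWalk E) (hr : ∀ e ∈ E, r e.1 e.2) : (E.map Prod.fst).Pairwise r := by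
  refine isChain_iff_pairwise.1 (isChain_map _ |>.2 (hE.imp_of_mem_imp ?_))
  rintro e f he - hef
  exact hef ▸ hr e he

theorem IsWalk.sublist_filter_product {r : α → α → Prop} [IsStrictOrder α r] [DecidableRel r]
    {E : List (α × α)} (hE : IsWalk E) (hr : ∀ e ∈ E, r e.1 e.2) {l : List α}
    (hl : l.Pairwise r) (L : List α) (hmem : ∀ e ∈ E, e.1 ∈ l ∧ e.2 ∈ L) :
    E <+ (l ×ˢ L).filter fun e => r e.1 e.2 := by
  induction l generalizing E with
  | nil =>
    obtain _ | ⟨e, E⟩ := E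
    · exact nil_sublist _
    · exact absurd (hmem e mem_cons_self).1 not_mem_nil
  | cons x l ih =>
    rw [product_cons, filter_append]
    obtain _ | ⟨e, E⟩ := E
    · exact nil_sublist _
    have hfst : ∀ f ∈ E, r e.1 f.1 := fun f hf =>
      (pairwise_cons.1 (hE.pairwise_fst hr)).1 _ (mem_map_of_mem hf)
    have hxl : ∀ a, r x a → a ∈ x :: l → a ∈ l := fun a hxa ha =>
      (mem_cons.1 ha).resolve_left (ne_of_irrefl' hxa)
    -- the sources along an `r`-walk increase, so only its first edge can leave from `x`
    by_cases hex : e.1 = x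
    · have htail : ∀ f ∈ E, f.1 ∈ l ∧ f.2 ∈ L := fun f hf =>
        ⟨hxl _ (hex ▸ hfst f hf) (hmem f (mem_cons_of_mem _ hf)).1,
          (hmem f (mem_cons_of_mem _ hf)).2⟩
      refine (singleton_sublist.2 ?_).append (ih hE.tail (fun f hf => hr f (mem_cons_of_mem _ hf))
        hl.of_cons htail)
      exact mem_filter.2 ⟨mem_map.2 ⟨e.2, (hmem e mem_cons_self).2, by rw [← hex]⟩,
        decide_eq_true (hr e mem_cons_self)⟩
    · have hxe : r x e.1 :=
        (pairwise_cons.1 hl).1 _ ((mem_cons.1 (hmem e mem_cons_self).1).resolve_left hex)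
      refine (ih hE hr hl.of_cons fun f hf => ⟨hxl _ ?_ (hmem f hf).1, (hmem f hf).2⟩).trans
        (sublist_append_right _ _)
      rcases mem_cons.1 hf with rfl | hf
      · exact hxe
      · exact _root_.trans hxe (hfst f hf)

section LinearOrder

variable [LinearOrder α]

def ascends (e : α × α) : Bool := e.1 < e.2

def sweep (l : List α) : Bool → List (α × α)
  | true => (l ×ˢ l).filter fun e => e.1 < e.2
  | false => (l.reverse ×ˢ l).filter fun e => e.1 > e.2

def sweeps (l : List α) : Bool → ℕ → List (α × α)
  | _, 0 => []
  | d, k + 1 => sweep l d ++ sweeps l (!d) k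

variable {l : List α}

theorem ne_of_mem_sweep {d : Bool} {e : α × α} (he : e ∈ sweep l d) : e.1 ≠ e.2 := by
  cases d
  · exact (of_decide_eq_true (mem_filter.1 he).2).ne'
  · exact (of_decide_eq_true (mem_filter.1 he).2).ne

theorem ne_of_mem_sweeps {d : Bool} {k : ℕ} {e : α × α} (he : e ∈ sweeps l d k) : e.1 ≠ e.2 := by
  induction k generalizing d with
  | zero => simp [sweeps] at he
  | succ k ih => exact (mem_append.1 he).elim ne_of_mem_sweep ih

theorem length_sweep_add_length_sweep_le (hl : l.Nodup) :
    (sweep l true).length + (sweep l false).length ≤ l.length * (l.length - 1) := by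
  have hnd : (sweep l true ++ sweep l false).Nodup := by
    refine nodup_append.2 ⟨(hl.product hl).filter _, ((nodup_reverse.2 hl).product hl).filter _, ?_⟩
    rintro e he f hf rfl
    exact lt_asymm (of_decide_eq_true (mem_filter.1 he).2) (of_decide_eq_true (mem_filter.1 hf).2)
  have hsub : (sweep l true ++ sweep l false).toFinset ⊆ l.toFinset.offDiag := by
    rintro ⟨a, b⟩ he
    simp only [mem_toFinset, mem_append, sweep, mem_filter, mem_product, mem_reverse,
      decide_eq_true_eq] at he
    rw [Finset.mem_offDiag, mem_toFinset, mem_toFinset]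
    rcases he with ⟨⟨ha, hb⟩, hab⟩ | ⟨⟨ha, hb⟩, hab⟩
    exacts [⟨ha, hb, hab.ne⟩, ⟨ha, hb, hab.ne'⟩]
  calc (sweep l true).length + (sweep l false).length
      = (sweep l true ++ sweep l false).toFinset.card := by
        rw [toFinset_card_of_nodup hnd, length_append]
    _ ≤ l.toFinset.offDiag.card := Finset.card_le_card hsub
    _ = l.length * (l.length - 1) := by
        rw [Finset.offDiag_card, toFinset_card_of_nodup hl, Nat.mul_sub_one]

theorem length_sweeps_two_mul (m : ℕ) :
    (sweeps l true (2 * m)).length = m * ((sweep l true).length + (sweep l false).length) := by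
  induction m with
  | zero => simp [sweeps]
  | succ m ih =>
    rw [Nat.mul_succ, sweeps, sweeps]
    simp only [length_append, Bool.not_true, Bool.not_false, ih]
    ring

theorem length_sweeps_two_mul_le (hl : l.Nodup) (m : ℕ) :
    (sweeps l true (2 * m)).length ≤ m * (l.length * (l.length - 1)) :=
  (length_sweeps_two_mul m).trans_le (Nat.mul_le_mul_left m (length_sweep_add_length_sweep_le hl))

variable (hl : l.Pairwise (· < ·)) (hall : ∀ a, a ∈ l)
include hl hall

theorem IsWalk.sublist_sweep {E : List (α × α)} (hE : IsWalk E) (hloop : ∀ e ∈ E, e.1 ≠ e.2)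
    {d : Bool} (hd : ∀ e ∈ E, ascends e = d) : E <+ sweep l d := by
  cases d
  · refine hE.sublist_filter_product (r := (· > ·)) (fun e he => ?_) (pairwise_reverse.2 hl) l
      fun e _ => ⟨mem_reverse.2 (hall _), hall _⟩
    have := hd e he
    simp only [ascends, decide_eq_false_iff_not, not_lt] at this
    exact this.lt_of_ne (hloop e he).symm
  · exact hE.sublist_filter_product (fun e he => by simpa [ascends] using hd e he) hl l
      fun e _ => ⟨hall _, hall _⟩

theorem IsWalk.sublist_sweeps {k : ℕ} {d : Bool} {E : List (α × α)} (hE : IsWalk E)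
    (hloop : ∀ e ∈ E, e.1 ≠ e.2) (hk : E.length ≤ k) (hd : ∀ e ∈ E.head?, ascends e = d) :
    E <+ sweeps l d k := by
  induction k generalizing d E with
  | zero => simp [eq_nil_of_length_eq_zero (Nat.le_zero.1 hk)]
  | succ k ih =>
    let p : α × α → Bool := fun e => ascends e == d
    rw [← takeWhile_append_dropWhile (p := p) (l := E), sweeps]
    refine .append ?_ (ih (hE.infix (dropWhile_suffix p).isInfix)
      (fun e he => hloop e ((dropWhile_suffix p).subset he)) ?_ ?_)
    · refine (hE.infix (takeWhile_prefix p).isInfix).sublist_sweep hl hall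
        (fun e he => hloop e ((takeWhile_prefix p).subset he)) fun e he => ?_
      simpa [p] using mem_takeWhile_imp he
    · obtain _ | ⟨e, E⟩ := E
      · simp
      · rw [dropWhile_cons_of_pos (by simpa [p] using hd e rfl)]
        exact (dropWhile_suffix p).length_le.trans (by simpa using hk)
    · intro e he
      have := head?_dropWhile_not p E
      rw [Option.mem_def.1 he] at this
      simpa [p, Bool.eq_not] using this

theorem IsWalk.sublist_sweeps_of_length_lt {k : ℕ} {E : List (α × α)} (hE : IsWalk E)
    (hloop : ∀ e ∈ E, e.1 ≠ e.2) (hk : E.length < k) (d : Bool) : E <+ sweeps l d k := by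
  obtain _ | k := k
  · simp at hk
  obtain _ | ⟨e, E'⟩ := E
  · exact nil_sublist _
  by_cases hed : ascends e = d
  · exact hE.sublist_sweeps hl hall hloop hk.le fun f hf => by simp_all
  · refine (hE.sublist_sweeps hl hall hloop (Nat.le_of_lt_succ hk) fun f hf => ?_).trans
      (sublist_append_right _ _)
    simp_all [Bool.eq_not]

theorem isValidRelaxSeq_sweeps {k : ℕ} (hk : l.length ≤ k) (s : α) (d : Bool) :
    IsValidRelaxSeq s (sweeps l d k) := by
  intro p hne _ hp
  refine (isWalk_zip_tail p).sublist_sweeps_of_length_lt hl hall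
    (hp.isChain.rel_of_mem_zip_tail) ?_ d
  have := (hp.subperm fun a _ => hall a).length_le
  have := length_pos_iff.2 hne
  simp only [length_zip, length_tail]
  omega

end LinearOrder

/-- Yen's improvement: for all sufficiently large `n` there is a valid relaxation
sequence for the complete directed graph on `n` vertices of length at most
`(1/2 + ε) n³`. -/
theorem stmt_12 (ε : ℝ) (hε : 0 < ε) :
    ∃ N : ℕ, ∀ n : ℕ, N ≤ n → ∀ s : Fin n,
      ∃ S : List (Fin n × Fin n), (∀ e ∈ S, e.1 ≠ e.2) ∧ IsValidRelaxSeq s S ∧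
        (S.length : ℝ) ≤ ((1 / 2 : ℝ) + ε) * (n : ℝ) ^ 3 := by
  refine ⟨0, fun n _ s => ⟨sweeps (finRange n) true (2 * ((n + 1) / 2)), fun _ => ne_of_mem_sweeps,
    isValidRelaxSeq_sweeps (pairwise_lt_finRange n) mem_finRange (by simp; omega) s true, ?_⟩⟩
  have hS := length_sweeps_two_mul_le (nodup_finRange n) ((n + 1) / 2)
  rw [length_finRange] at hS
  have hcube : 2 * ((n + 1) / 2 * (n * (n - 1))) ≤ n ^ 3 :=
    calc 2 * ((n + 1) / 2 * (n * (n - 1))) ≤ (n + 1) * (n * (n - 1)) := by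
          rw [← mul_assoc]; exact Nat.mul_le_mul_right _ (Nat.mul_div_le _ _)
      _ ≤ n ^ 3 := by
          cases n with
          | zero => simp
          | succ n => simp only [Nat.add_sub_cancel]; ring_nf; omega
  have hS' : 2 * ((sweeps (finRange n) true (2 * ((n + 1) / 2))).length : ℝ) ≤ n ^ 3 := by
    exact_mod_cast (Nat.mul_le_mul_left 2 hS).trans hcube
  nlinarith [pow_nonneg (Nat.cast_nonneg (α := ℝ) n) 3]
end

section
/- Let G be the complete directed graph on the 2n + 1 vertices {s, x₁, y₁, …, xₙ, yₙ}, and for i ∈ {1,…,n} let eᵢ denote the edge (xᵢ, yᵢ). Let R be any finite sequence of edges of G containing no occurrence of any eᵢ, let T = (t₁, …, t_m) be a sequence over {1, …, n}, and let S be the concatenation R · (e_{t₁}) · R · (e_{t₂}) · ⋯ · R · (e_{t_m}) · R. If some permutation π of {1, …, n} is not a subsequence of T, then S does not contain the simple path (s, x_{π(1)}, y_{π(1)}, x_{π(2)}, y_{π(2)}, …, x_{π(n)}, y_{π(n)}); in particular, S is not a valid relaxation sequence for G. -/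
/-- The vertex set `{s, x₁, y₁, …, xₙ, yₙ}` of size `2n + 1`: the source is `none`,
`xᵢ = some (Sum.inl i)` and `yᵢ = some (Sum.inr i)`. -/
abbrev Vtx (n : ℕ) := Option (Fin n ⊕ Fin n)

/-- The special edge `eᵢ = (xᵢ, yᵢ)`. -/
def specialEdge {n : ℕ} (i : Fin n) : Vtx n × Vtx n :=
  (some (Sum.inl i), some (Sum.inr i))

/-- The simple path `(s, x_{π 1}, y_{π 1}, …, x_{π n}, y_{π n})`. -/
def permPath (n : ℕ) (π : Equiv.Perm (Fin n)) : List (Vtx n) :=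
  none :: (List.ofFn fun i : Fin n =>
    [some (Sum.inl (π i)), some (Sum.inr (π i))]).flatten

/-!
The special edges occurring in `S` are, in order, `e_{t₁}, …, e_{t_m}`, while the path
`(s, x_{π 1}, y_{π 1}, …)` traverses `e_{π 1}, …, e_{π n}` in this order. Keeping only the
special edges of both sequences and reading off their indices turns a containment of the path
in `S` into a containment of `π` in `T`.
-/

open Function

section Interleave

variable {α β : Type*} {g : β → α}

lemma filterMap_partialInv_eq_nil (hg : Injective g) {R : List α} (hR : ∀ b, g b ∉ R) :
    R.filterMap (partialInv g) = [] := by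
  refine List.filterMap_eq_nil_iff.2 fun a ha => Option.eq_none_iff_forall_ne_some.2 ?_
  intro b hb
  exact hR b (hg.isPartialInv b a |>.1 hb ▸ ha)

lemma filterMap_partialInv_interleave (hg : Injective g) {R : List α} (hR : ∀ b, g b ∉ R)
    (T : List β) :
    ((T.map fun t => R ++ [g t]).flatten ++ R).filterMap (partialInv g) = T := by
  induction T with
  | nil => simpa using filterMap_partialInv_eq_nil hg hR
  | cons t T ih =>
    rw [List.map_cons, List.flatten_cons, List.append_assoc, List.filterMap_append, ih,
      List.filterMap_append, filterMap_partialInv_eq_nil hg hR]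
    simp [partialInv_left hg]

lemma sublist_of_map_sublist_interleave (hg : Injective g) {R : List α} (hR : ∀ b, g b ∉ R)
    {L T : List β} (h : (L.map g).Sublist ((T.map fun t => R ++ [g t]).flatten ++ R)) :
    L.Sublist T := by
  have := h.filterMap (partialInv g)
  rwa [filterMap_partialInv_interleave hg hR, List.filterMap_map,
    show partialInv g ∘ g = some from funext (partialInv_left hg), List.filterMap_some] at this

end Interleave

lemma map_sublist_zip_flatMap_pair {α β : Type*} (x y : β → α) (l : List β) (v : α) :
    (l.map fun i => (x i, y i)).Sublist
      ((v :: l.flatMap fun i => [x i, y i]).zip (l.flatMap fun i => [x i, y i])) := by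
  induction l generalizing v with
  | nil => exact List.nil_sublist _
  | cons i l ih =>
    simp only [List.map_cons, List.flatMap_cons, List.cons_append, List.nil_append,
      List.zip_cons_cons]
    exact ((ih (y i)).cons_cons _).cons _

lemma specialEdge_injective (n : ℕ) : Injective (fun i : Fin n => specialEdge i) := by
  intro i j h
  simpa [specialEdge] using h

lemma permPath_eq_flatMap (n : ℕ) (π : Equiv.Perm (Fin n)) :
    permPath n π = none :: (List.ofFn fun i => π i).flatMap
      fun i => [some (Sum.inl i), some (Sum.inr i)] := by
  simp only [permPath, List.flatMap, List.map_ofFn, comp_def]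

lemma map_specialEdge_sublist_permPath_edges (n : ℕ) (π : Equiv.Perm (Fin n)) :
    ((List.ofFn fun i => π i).map specialEdge).Sublist
      ((permPath n π).zip (permPath n π).tail) := by
  rw [permPath_eq_flatMap]
  exact map_sublist_zip_flatMap_pair _ _ _ none

lemma permPath_nodup (n : ℕ) (π : Equiv.Perm (Fin n)) : (permPath n π).Nodup := by
  rw [permPath_eq_flatMap, List.nodup_cons, List.nodup_flatMap]
  refine ⟨by simp, fun _ _ => by simp, ?_⟩
  refine List.Pairwise.imp ?_ (List.nodup_ofFn.2 π.injective)
  intro a b hab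
  simp [onFun, List.disjoint_iff_ne, hab]

theorem stmt_13_general (n : ℕ) (R : List (Vtx n × Vtx n))
    (hR : ∀ i : Fin n, specialEdge i ∉ R)
    (T : List (Fin n))
    (S : List (Vtx n × Vtx n))
    (hS : S = (T.map fun t => R ++ [specialEdge t]).flatten ++ R)
    (π : Equiv.Perm (Fin n))
    (hπ : ¬ (List.ofFn fun i => π i).Sublist T) :
    ¬ ((permPath n π).zip (permPath n π).tail).Sublist S ∧
    ¬ IsValidRelaxSeq (none : Vtx n) S := by
  have not_contained : ¬ ((permPath n π).zip (permPath n π).tail).Sublist S := by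
    intro hsub
    subst hS
    exact hπ <| sublist_of_map_sublist_interleave (specialEdge_injective n) hR
      ((map_specialEdge_sublist_permPath_edges n π).trans hsub)
  refine ⟨not_contained, fun hvalid => not_contained ?_⟩
  exact hvalid _ (by simp [permPath]) (by simp [permPath]) (permPath_nodup n π)

/-- If `R` contains no special edge `eᵢ`, `S = R·(e_{t₁})·R·(e_{t₂})⋯R·(e_{t_m})·R`,
and the permutation `π` is not a subsequence of `T = (t₁, …, t_m)`, then `S` does not
contain the simple path `(s, x_{π 1}, y_{π 1}, …, x_{π n}, y_{π n})`; in particular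
`S` is not a valid relaxation sequence. -/
theorem stmt_13 (n : ℕ) (R : List (Vtx n × Vtx n))
    (hRe : ∀ f ∈ R, f.1 ≠ f.2)
    (hR : ∀ i : Fin n, specialEdge i ∉ R)
    (T : List (Fin n))
    (S : List (Vtx n × Vtx n))
    (hS : S = (T.map fun t => R ++ [specialEdge t]).flatten ++ R)
    (π : Equiv.Perm (Fin n))
    (hπ : ¬ (List.ofFn fun i => π i).Sublist T) :
    ¬ ((permPath n π).zip (permPath n π).tail).Sublist S ∧
    ¬ IsValidRelaxSeq (none : Vtx n) S :=
  stmt_13_general n R hR T S hS π hπ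
end

section
/- Let G be the complete directed graph on the 2n + 1 vertices {s, x₁, y₁, …, xₙ, yₙ}, and for i ∈ {1,…,n} let eᵢ denote the edge (xᵢ, yᵢ). Let Q be a valid relaxation sequence for G, let R be the sequence obtained from Q by deleting every occurrence of every eᵢ, let T = (t₁, …, t_m) be a sequence over {1, …, n}, and let S be the concatenation R · (e_{t₁}) · R · (e_{t₂}) · ⋯ · R · (e_{t_m}) · R. If every permutation of {1, …, n} is a subsequence of T, then S is a valid relaxation sequence for G. -/
/-!
The edge sequence `E` of a simple path from `s` lies in `Q`, so its ordinary edges occur in `R`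
in order. Its special edges are pairwise distinct, since the heads of the edges of a simple path
are, so their indices form a duplicate-free list; this extends to a permutation of `{1, …, n}`
and therefore occurs in `T`. Writing `S = R · (e_{t₁} · R) ⋯ (e_{t_m} · R)`, `E` embeds
greedily: each ordinary edge goes into the current copy of `R`, and each special edge `eᵢ` to the
next `i` of `T`, after which a fresh copy of `R` is available.
-/

open List

lemma List.Sublist.exists_eq_append_cons {α : Type*} {a : α} {l l' : List α}
    (h : a :: l <+ l') : ∃ l₁ l₂, l' = l₁ ++ a :: l₂ ∧ l <+ l₂ := by
  obtain ⟨r₁, r₂, rfl, ha, hl⟩ := cons_sublist_iff.1 h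
  obtain ⟨s, t, rfl⟩ := append_of_mem ha
  exact ⟨s, t ++ r₂, by simp, hl.trans (sublist_append_right t r₂)⟩

lemma List.Nodup.zip_tail {α : Type*} {p : List α} (hp : p.Nodup) : (p.zip p.tail).Nodup :=
  Nodup.of_map Prod.snd <| by
    rw [map_snd_zip (by simp)]
    exact hp.tail

lemma List.Nodup.exists_perm_sublist_ofFn {n : ℕ} {L : List (Fin n)} (hL : L.Nodup) :
    ∃ π : Equiv.Perm (Fin n), L <+ ofFn fun i => π i := by
  set M := L ++ (finRange n).diff L
  have hM : M ~ finRange n := subperm_append_diff_self_of_count_le fun x hx => by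
    rw [count_eq_one_of_mem hL hx, count_eq_one_of_mem (nodup_finRange n) (by simp)]
  have hlen : M.length = n := by simpa using hM.length_eq
  refine ⟨(finCongr hlen.symm).trans
    ((hM.nodup_iff.2 (nodup_finRange n)).getEquivOfForallMemList M fun x => hM.mem_iff.2 (by simp)),
    ?_⟩
  have hofFn : (ofFn fun i : Fin n => M[(i : ℕ)]) = M :=
    ext_getElem (by simp [hlen]) (by simp)
  simp [Nodup.getEquivOfForallMemList, hofFn, M]

section Interleaving

variable {α ι : Type*} {e : ι → α} {g : α → Option ι}

lemma Function.IsPartialInv.isNone_eq_decide (hg : Function.IsPartialInv e g) (a : α)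
    [Decidable (∀ i, a ≠ e i)] : (g a).isNone = decide (∀ i, a ≠ e i) := by
  rw [Bool.eq_iff_iff, decide_eq_true_iff, Option.isNone_iff_eq_none]
  simp [Option.eq_none_iff_forall_ne_some, hg _ a, eq_comm]

lemma flatten_map_append_singleton_append (e : ι → α) (C : List α) (T : List ι) :
    (T.map fun t => C ++ [e t]).flatten ++ C = C ++ (T.map fun t => e t :: C).flatten := by
  induction T with
  | nil => simp
  | cons t T ih => simp [ih]

/-- `C'` is the still unused suffix of the current copy of `C`. -/
lemma sublist_append_flatten_map_cons (hg : Function.IsPartialInv e g) (C : List α) :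
    ∀ {E : List α} {T : List ι} {C' : List α}, C' <+ C → E.filter (fun a => (g a).isNone) <+ C' →
      E.filterMap g <+ T → E <+ C' ++ (T.map fun t => e t :: C).flatten := by
  intro E
  induction E with
  | nil => exact fun _ _ _ => nil_sublist _
  | cons a E ih =>
    intro T C' hC' hfilter hfilterMap
    rcases hga : g a with _ | i
    · rw [filter_cons_of_pos (by simp [hga])] at hfilter
      rw [filterMap_cons_none hga] at hfilterMap
      obtain ⟨C₁, C₂, rfl, hE⟩ := hfilter.exists_eq_append_cons
      have hC₂ : C₂ <+ C := ((sublist_cons_self a C₂).trans (sublist_append_right C₁ _)).trans hC'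
      rw [append_assoc, cons_append]
      exact ((ih hC₂ hE hfilterMap).cons_cons a).trans (sublist_append_right C₁ _)
    · rw [filter_cons_of_neg (by simp [hga])] at hfilter
      rw [filterMap_cons_some hga] at hfilterMap
      obtain ⟨T₁, T₂, rfl, hE⟩ := hfilterMap.exists_eq_append_cons
      rw [← (hg i a).1 hga, map_append, flatten_append, ← append_assoc, map_cons, flatten_cons,
        cons_append]
      exact ((ih (Sublist.refl C) (hfilter.trans hC') hE).cons_cons (e i)).trans
        (sublist_append_right _ _)

end Interleaving

lemma specialEdge_injective_s14 {n : ℕ} : Function.Injective (specialEdge (n := n)) := by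
  intro i j h
  simpa [specialEdge] using h

theorem stmt_14_general (n : ℕ) (Q : List (Vtx n × Vtx n))
    (hQ : IsValidRelaxSeq (none : Vtx n) Q)
    (R : List (Vtx n × Vtx n))
    (hR : R = Q.filter fun f => decide (∀ i : Fin n, f ≠ specialEdge i))
    (T : List (Fin n))
    (S : List (Vtx n × Vtx n))
    (hS : S = (T.map fun t => R ++ [specialEdge t]).flatten ++ R)
    (hT : ∀ π : Equiv.Perm (Fin n), (List.ofFn fun i => π i).Sublist T) :
    IsValidRelaxSeq (none : Vtx n) S := by
  intro p hne hhead hnodup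
  have hg := (specialEdge_injective_s14 (n := n)).isPartialInv
  have hordinary :
      (p.zip p.tail).filter (fun f => (Function.partialInv specialEdge f).isNone) <+ R := by
    rw [hR, ← filter_congr fun f _ => hg.isNone_eq_decide f]
    exact (hQ p hne hhead hnodup).filter _
  have hspecial : ((p.zip p.tail).filterMap (Function.partialInv specialEdge)).Nodup :=
    hnodup.zip_tail.filterMap fun a a' i ha ha' => ((hg i a).1 ha).symm.trans ((hg i a').1 ha')
  obtain ⟨π, hπ⟩ := hspecial.exists_perm_sublist_ofFn
  rw [hS, flatten_map_append_singleton_append]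
  exact sublist_append_flatten_map_cons hg R (Sublist.refl R) hordinary (hπ.trans (hT π))

/-- If `Q` is a valid relaxation sequence, `R` is `Q` with every occurrence of every
special edge `eᵢ` deleted, `S = R·(e_{t₁})·R·(e_{t₂})⋯R·(e_{t_m})·R`, and every
permutation of `{1, …, n}` is a subsequence of `T = (t₁, …, t_m)`, then `S` is a
valid relaxation sequence. -/
theorem stmt_14 (n : ℕ) (Q : List (Vtx n × Vtx n))
    (hQe : ∀ f ∈ Q, f.1 ≠ f.2)
    (hQ : IsValidRelaxSeq (none : Vtx n) Q)
    (R : List (Vtx n × Vtx n))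
    (hR : R = Q.filter fun f => decide (∀ i : Fin n, f ≠ specialEdge i))
    (T : List (Fin n))
    (S : List (Vtx n × Vtx n))
    (hS : S = (T.map fun t => R ++ [specialEdge t]).flatten ++ R)
    (hT : ∀ π : Equiv.Perm (Fin n), (List.ofFn fun i => π i).Sublist T) :
    IsValidRelaxSeq (none : Vtx n) S :=
  stmt_14_general n Q hQ R hR T S hS hT
end
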